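/- Let D ≥ 1, let c₁,…,c_D be nonzero real numbers, let V₀ be the D×D real matrix with all diagonal entries 0, entries 1 on the sub- and super-diagonal and 0 elsewhere, and let E ∈ ℝ. For ω = (ω₁,…,ω_D) ∈ {0,1}^D set M_ω(E) = V₀ + diag(c₁ω₁,…,c_Dω_D) − E·I_D and X_ω(E) = [[0, I_D],[M_ω(E), 0]] ∈ M_{2D}(ℝ). Then the Lie subalgebra of M_{2D}(ℝ) (with bracket [A,B] = AB − BA) generated by the set {X_ω(E) : ω ∈ {0,1}^D} is equal to 𝔰𝔭_D(ℝ). -/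

import Mathlib

/-!
Write `𝔰𝔭_D` as the matrices `[[A, B], [C, -Aᵀ]]` with `B`, `C` symmetric, and let
`X₀ = [[0, 1], [M, 0]]` be the generator with `ω = 0`. The differences `X_{eᵢ} - X₀` are the
lower blocks `c_i Eᵢᵢ`, and bracketing them with `X₀` gives `diag(Eᵢᵢ, -Eᵢᵢ)`. Bracketing twice
more with `X₀` gives `diag(3EᵢᵢM + MEᵢᵢ, ⋯)`, whose commutator with `diag(Eⱼⱼ, -Eⱼⱼ)` is
`3Mᵢⱼ Eᵢⱼ - Mⱼᵢ Eⱼᵢ`. Since `Mᵢ,ᵢ₊₁ = 1`, this yields `Eᵢⱼ` for neighbours `i`, `j`, and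
commutators along the path `1 - 2 - ⋯ - D` give a copy of all of `𝔤𝔩_D`. Bracketing `𝔤𝔩_D`
with the lower block `1 = Σ Eᵢᵢ` and the upper block `1` (that is, `X₀` minus the lower block `M`)
yields every symmetric lower and upper block.
-/

open scoped Matrix

attribute [local instance 100] LieRing.ofAssociativeRing

/-- The standard symplectic form matrix `J = [[0, -I],[I, 0]]`. -/
def Jmat (D : ℕ) : Matrix (Fin D ⊕ Fin D) (Fin D ⊕ Fin D) ℝ :=
  Matrix.fromBlocks 0 (-1) 1 0

/-- The symplectic Lie algebra `𝔰𝔭_D(ℝ)`, as a set of `2D × 2D` real matrices `X` with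
`Xᵀ J + J X = 0`. -/
def spSet (D : ℕ) : Set (Matrix (Fin D ⊕ Fin D) (Fin D ⊕ Fin D) ℝ) :=
  {X | Xᵀ * Jmat D + Jmat D * X = 0}

/-- The free interaction matrix `V₀`: zero diagonal, `1` on the sub- and super-diagonal. -/
def V0 (D : ℕ) : Matrix (Fin D) (Fin D) ℝ :=
  Matrix.of fun i j => if (i : ℕ) + 1 = (j : ℕ) ∨ (j : ℕ) + 1 = (i : ℕ) then 1 else 0

/-- `M_ω(E) = V₀ + diag(c₁ω₁,…,c_Dω_D) − E·I`. -/
noncomputable def Mmat (D : ℕ) (c : Fin D → ℝ) (E : ℝ) (v : Fin D → ℝ) :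
    Matrix (Fin D) (Fin D) ℝ :=
  V0 D + Matrix.diagonal (fun i => c i * v i) - E • 1

/-- `X_ω(E) = [[0, I],[M_ω(E), 0]]`. -/
noncomputable def Xmat (D : ℕ) (c : Fin D → ℝ) (E : ℝ) (v : Fin D → ℝ) :
    Matrix (Fin D ⊕ Fin D) (Fin D ⊕ Fin D) ℝ :=
  Matrix.fromBlocks 0 1 (Mmat D c E v) 0

open Matrix LieAlgebra.Symplectic

theorem Matrix.fromBlocks_sub {l m n o α : Type*} [Sub α] (A A' : Matrix n l α)
    (B B' : Matrix n m α) (C C' : Matrix o l α) (D D' : Matrix o m α) :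
    fromBlocks A B C D - fromBlocks A' B' C' D' =
      fromBlocks (A - A') (B - B') (C - C') (D - D') := by
  ext (i | i) (j | j) <;> rfl

namespace Matrix

section CommRing

variable {n R : Type*} [Fintype n] [DecidableEq n] [CommRing R]
  {L : LieSubalgebra R (Matrix n n R)}

theorem single_one_mem_trans {i k j : n} (hij : i ≠ j) (hik : single i k (1 : R) ∈ L)
    (hkj : single k j (1 : R) ∈ L) : single i j (1 : R) ∈ L := by
  simpa [Ring.lie_def, hij.symm] using L.lie_mem hik hkj

theorem lie_three_smul_single_mul_add_mul_single {M : Matrix n n R} {i j : n} (hij : i ≠ j) :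
    ⁅(3 : R) • (single i i 1 * M) + M * single i i 1, single j j (1 : R)⁆ =
      (3 * M i j) • single i j 1 - M j i • single j i 1 := by
  have hij0 : single i i (1 : R) * single j j 1 = 0 := by simp [hij]
  have hji0 : single j j (1 : R) * single i i 1 = 0 := by simp [hij.symm]
  rw [Ring.lie_def, add_mul, mul_add, smul_mul_assoc, mul_smul_comm, Matrix.mul_assoc M, hij0,
    mul_zero, ← Matrix.mul_assoc (single j j 1) (single i i 1), hji0, zero_mul, smul_zero,
    ← Matrix.mul_assoc (single j j 1) M, single_mul_mul_single, single_mul_mul_single]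
  simp [smul_single]

theorem lieSubalgebra_eq_top_of_single_one_mem {D : ℕ}
    {L : LieSubalgebra R (Matrix (Fin D) (Fin D) R)} (hdiag : ∀ i, single i i (1 : R) ∈ L)
    (hadj : ∀ i j : Fin D, (i : ℕ) + 1 = j ∨ (j : ℕ) + 1 = i → single i j (1 : R) ∈ L) :
    L = ⊤ := by
  have hdist : ∀ k : ℕ, ∀ i j : Fin D, (i : ℕ) + k + 1 = j ∨ (j : ℕ) + k + 1 = i →
      single i j (1 : R) ∈ L := by
    intro k
    induction k with
    | zero => simpa using hadj
    | succ k ih =>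
      rintro i j (h | h)
      · exact single_one_mem_trans (k := ⟨i + k + 1, by omega⟩) (Fin.ne_of_val_ne (by omega))
          (ih _ _ (Or.inl rfl)) (hadj _ _ (Or.inl (by simp only; omega)))
      · exact single_one_mem_trans (k := ⟨j + k + 1, by omega⟩) (Fin.ne_of_val_ne (by omega))
          (hadj _ _ (Or.inr (by simp only; omega))) (ih _ _ (Or.inr rfl))
  have hall : ∀ i j, single i j (1 : R) ∈ L := by
    intro i j
    rcases lt_trichotomy (i : ℕ) j with h | h | h
    · exact hdist (j - i - 1) i j (Or.inl (by omega))
    · exact Fin.ext h ▸ hdiag i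
    · exact hdist (i - j - 1) i j (Or.inr (by omega))
  rw [eq_top_iff]
  rintro A -
  induction A using Matrix.induction_on' with
  | h_zero => exact L.zero_mem
  | h_add A B hA hB => exact add_mem hA hB
  | h_std_basis i j x => simpa [smul_single] using L.smul_mem x (hall i j)

end CommRing

section Field

variable {n K : Type*} [Fintype n] [DecidableEq n] [Field K] [NeZero (2 : K)]
  {L : LieSubalgebra K (Matrix n n K)}

theorem single_one_mem_of_three_smul_mul_add_mem {M : Matrix n n K} (hM : Mᵀ = M) {i j : n}
    (hij : i ≠ j) (hMij : M i j ≠ 0) (hi : single i i (1 : K) ∈ L) (hj : single j j (1 : K) ∈ L)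
    (hCi : (3 : K) • (single i i 1 * M) + M * single i i 1 ∈ L)
    (hCj : (3 : K) • (single j j 1 * M) + M * single j j 1 ∈ L) : single i j (1 : K) ∈ L := by
  have hMji : M j i = M i j := congrFun (congrFun hM i) j
  have hCi_j := L.lie_mem hCi hj
  have hCj_i := L.lie_mem hCj hi
  rw [lie_three_smul_single_mul_add_mul_single hij, hMji] at hCi_j
  rw [lie_three_smul_single_mul_add_mul_single hij.symm, hMji] at hCj_i
  have h8 : (8 : K) ≠ 0 := by
    rw [show (8 : K) = 2 ^ 3 by norm_num]
    exact pow_ne_zero _ two_ne_zero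
  have hcomb : single i j (1 : K) = (8 * M i j)⁻¹ •
      ((3 : K) • ((3 * M i j) • single i j 1 - M i j • single j i 1) +
        ((3 * M i j) • single j i 1 - M i j • single i j 1)) := by
    rw [eq_inv_smul_iff₀ (mul_ne_zero h8 hMij)]
    module
  rw [hcomb]
  exact L.smul_mem _ (add_mem (L.smul_mem _ hCi_j) hCj_i)

end Field

end Matrix

namespace LieAlgebra.Symplectic

section Blocks

variable {n R : Type*} [CommRing R]

def spUpper : Matrix n n R →ₗ[R] Matrix (n ⊕ n) (n ⊕ n) R where
  toFun B := fromBlocks 0 B 0 0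
  map_add' B B' := by simp [fromBlocks_add]
  map_smul' r B := by simp [fromBlocks_smul]

def spLower : Matrix n n R →ₗ[R] Matrix (n ⊕ n) (n ⊕ n) R where
  toFun C := fromBlocks 0 0 C 0
  map_add' C C' := by simp [fromBlocks_add]
  map_smul' r C := by simp [fromBlocks_smul]

theorem spUpper_apply (B : Matrix n n R) : spUpper B = fromBlocks 0 B 0 0 := rfl

theorem spLower_apply (C : Matrix n n R) : spLower C = fromBlocks 0 0 C 0 := rfl

variable [Fintype n] [DecidableEq n]

def spDiag : Matrix n n R →ₗ⁅R⁆ Matrix (n ⊕ n) (n ⊕ n) R where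
  toFun A := fromBlocks A 0 0 (-Aᵀ)
  map_add' A A' := by simp [fromBlocks_add, add_comm]
  map_smul' r A := by simp [fromBlocks_smul]
  map_lie' {A A'} := by simp [Ring.lie_def, fromBlocks_multiply, fromBlocks_sub]

theorem spDiag_apply (A : Matrix n n R) : spDiag A = fromBlocks A 0 0 (-Aᵀ) := rfl

theorem lie_spDiag_spUpper (A B : Matrix n n R) :
    ⁅spDiag A, spUpper B⁆ = spUpper (A * B + B * Aᵀ) := by
  simp [Ring.lie_def, spDiag_apply, spUpper_apply, fromBlocks_multiply, fromBlocks_sub]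

theorem lie_spDiag_spLower (A C : Matrix n n R) :
    ⁅spDiag A, spLower C⁆ = -spLower (Aᵀ * C + C * A) := by
  simp [Ring.lie_def, spDiag_apply, spLower_apply, fromBlocks_multiply, fromBlocks_neg,
    sub_eq_add_neg, fromBlocks_add, add_comm]

theorem lie_spUpper_spLower {B C : Matrix n n R} (hB : Bᵀ = B) (hC : Cᵀ = C) :
    ⁅spUpper B, spLower C⁆ = spDiag (B * C) := by
  simp [Ring.lie_def, spDiag_apply, spUpper_apply, spLower_apply, fromBlocks_multiply,
    fromBlocks_sub, hB, hC]

theorem lie_spUpper_spUpper (B B' : Matrix n n R) : ⁅spUpper B, spUpper B'⁆ = 0 := by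
  simp [Ring.lie_def, spUpper_apply, fromBlocks_multiply]

theorem lie_spLower_spLower (C C' : Matrix n n R) : ⁅spLower C, spLower C'⁆ = 0 := by
  simp [Ring.lie_def, spLower_apply, fromBlocks_multiply]

theorem lie_spLower_spUpper_one_add_spLower {S : Matrix n n R} (hS : Sᵀ = S) (M : Matrix n n R) :
    ⁅spLower S, spUpper 1 + spLower M⁆ = -spDiag S := by
  rw [lie_add, lie_spLower_spLower, add_zero, ← lie_skew, lie_spUpper_spLower transpose_one hS,
    one_mul]

theorem lie_lie_spDiag_spUpper_one_add_spLower (A : Matrix n n R) {M : Matrix n n R}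
    (hM : Mᵀ = M) :
    ⁅⁅spDiag A, spUpper 1 + spLower M⁆, spUpper 1 + spLower M⁆ =
      spDiag ((A + Aᵀ) * M + (Aᵀ * M + M * A)) := by
  have hsym : (Aᵀ * M + M * A)ᵀ = Aᵀ * M + M * A := by
    simp [transpose_add, transpose_mul, hM, add_comm]
  have hfirst : ⁅spDiag A, spUpper 1 + spLower M⁆ =
      spUpper (A + Aᵀ) - spLower (Aᵀ * M + M * A) := by
    rw [lie_add, lie_spDiag_spUpper, lie_spDiag_spLower, mul_one, one_mul, sub_eq_add_neg]
  rw [hfirst, sub_lie, lie_add, lie_add, lie_spUpper_spUpper,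
    lie_spUpper_spLower (by simp [add_comm]) hM, ← lie_skew,
    lie_spUpper_spLower transpose_one hsym, lie_spLower_spLower, one_mul]
  simp only [map_add]
  abel

theorem fromBlocks_mem_sp_iff (A B C D : Matrix n n R) :
    fromBlocks A B C D ∈ sp n R ↔ Bᵀ = B ∧ Cᵀ = C ∧ D = -Aᵀ := by
  rw [sp, mem_skewAdjointMatricesLieSubalgebra, mem_skewAdjointMatricesSubmodule,
    Matrix.IsSkewAdjoint, Matrix.IsAdjointPair]
  simp only [J, fromBlocks_transpose, fromBlocks_multiply, fromBlocks_neg, fromBlocks_inj,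
    mul_zero, mul_one, mul_neg, zero_mul, one_mul, neg_mul, zero_add, add_zero, neg_zero,
    neg_neg, neg_inj]
  constructor
  · rintro ⟨hC, rfl, -, hB⟩
    exact ⟨hB, hC, rfl⟩
  · rintro ⟨hB, hC, rfl⟩
    simp [hB, hC]

theorem sp_le_of_forall_mem {G : LieSubalgebra R (Matrix (n ⊕ n) (n ⊕ n) R)}
    (hdiag : ∀ A, spDiag A ∈ G) (hupper : ∀ B : Matrix n n R, Bᵀ = B → spUpper B ∈ G)
    (hlower : ∀ C : Matrix n n R, Cᵀ = C → spLower C ∈ G) : sp n R ≤ G := by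
  intro X hX
  rw [← fromBlocks_toBlocks X, fromBlocks_mem_sp_iff] at hX
  obtain ⟨hB, hC, hD⟩ := hX
  have hX : X = spDiag X.toBlocks₁₁ + spUpper X.toBlocks₁₂ + spLower X.toBlocks₂₁ := by
    conv_lhs => rw [← fromBlocks_toBlocks X, hD]
    simp [spDiag_apply, spUpper_apply, spLower_apply, fromBlocks_add]
  rw [hX]
  exact add_mem (add_mem (hdiag _) (hupper _ hB)) (hlower _ hC)

end Blocks

section CommRing

variable {n R : Type*} [Fintype n] [DecidableEq n] [CommRing R]
  {G : LieSubalgebra R (Matrix (n ⊕ n) (n ⊕ n) R)} {M : Matrix n n R}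

theorem spDiag_mem_of_spLower_mem (hX : spUpper 1 + spLower M ∈ G) {S : Matrix n n R}
    (hS : Sᵀ = S) (hL : spLower S ∈ G) : spDiag S ∈ G := by
  simpa [lie_spLower_spUpper_one_add_spLower hS] using neg_mem (G.lie_mem hL hX)

theorem spDiag_three_smul_single_mul_add_mem (hM : Mᵀ = M) (hX : spUpper 1 + spLower M ∈ G)
    {i : n} (hi : spDiag (single i i 1) ∈ G) :
    spDiag ((3 : R) • (single i i 1 * M) + M * single i i 1) ∈ G := by
  have h := G.lie_mem (G.lie_mem hi hX) hX
  rw [lie_lie_spDiag_spUpper_one_add_spLower _ hM, transpose_single] at h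
  convert h using 2
  rw [add_mul]
  module

end CommRing

section Field

variable {K : Type*} [Field K] [NeZero (2 : K)]

section

variable {n : Type*} [Fintype n] [DecidableEq n] {G : LieSubalgebra K (Matrix (n ⊕ n) (n ⊕ n) K)}

theorem spUpper_mem_of_forall_spDiag_mem (hdiag : ∀ A, spDiag A ∈ G) (h1 : spUpper 1 ∈ G)
    {S : Matrix n n K} (hS : Sᵀ = S) : spUpper S ∈ G := by
  have h := G.lie_mem (hdiag ((2⁻¹ : K) • S)) h1
  rwa [lie_spDiag_spUpper, mul_one, one_mul, transpose_smul, hS, ← add_smul, ← one_div,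
    add_halves, one_smul] at h

theorem spLower_mem_of_forall_spDiag_mem (hdiag : ∀ A, spDiag A ∈ G) (h1 : spLower 1 ∈ G)
    {S : Matrix n n K} (hS : Sᵀ = S) : spLower S ∈ G := by
  have h := G.lie_mem (hdiag (-(2⁻¹ : K) • S)) h1
  rwa [lie_spDiag_spLower, mul_one, one_mul, transpose_smul, hS, ← add_smul, ← neg_add,
    ← one_div, add_halves, neg_one_smul, map_neg, neg_neg] at h

end

theorem sp_le_of_spUpper_one_add_spLower_mem {D : ℕ}
    {G : LieSubalgebra K (Matrix (Fin D ⊕ Fin D) (Fin D ⊕ Fin D) K)}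
    {M : Matrix (Fin D) (Fin D) K} (hM : Mᵀ = M)
    (hadj : ∀ i j : Fin D, (i : ℕ) + 1 = j → M i j ≠ 0) (hX : spUpper 1 + spLower M ∈ G)
    (hL : ∀ i, spLower (single i i 1) ∈ G) : sp (Fin D) K ≤ G := by
  have hdiag_single : ∀ i, spDiag (single i i (1 : K)) ∈ G := fun i =>
    spDiag_mem_of_spLower_mem hX (transpose_single i i 1) (hL i)
  have hgl : G.comap spDiag = ⊤ := by
    refine lieSubalgebra_eq_top_of_single_one_mem hdiag_single fun i j hij => ?_
    have hMij : M i j ≠ 0 := by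
      rcases hij with h | h
      · exact hadj i j h
      · rw [← hM, transpose_apply]
        exact hadj j i h
    exact single_one_mem_of_three_smul_mul_add_mem hM (Fin.ne_of_val_ne (by omega)) hMij
      (hdiag_single i) (hdiag_single j)
      (spDiag_three_smul_single_mul_add_mem hM hX (hdiag_single i))
      (spDiag_three_smul_single_mul_add_mem hM hX (hdiag_single j))
  have hdiag : ∀ A, spDiag A ∈ G := fun A => hgl.ge (LieSubalgebra.mem_top A)
  have hlower_one : spLower 1 ∈ G := by
    rw [← sum_single_one, map_sum]
    exact sum_mem fun i _ => hL i
  have hlower : ∀ C : Matrix (Fin D) (Fin D) K, Cᵀ = C → spLower C ∈ G := fun _ =>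
    spLower_mem_of_forall_spDiag_mem hdiag hlower_one
  have hupper_one : spUpper 1 ∈ G := by simpa using sub_mem hX (hlower M hM)
  exact sp_le_of_forall_mem hdiag (fun _ => spUpper_mem_of_forall_spDiag_mem hdiag hupper_one)
    hlower

end Field

end LieAlgebra.Symplectic

theorem spSet_eq_sp (D : ℕ) : spSet D = sp (Fin D) ℝ := by
  ext X
  rw [SetLike.mem_coe, sp, mem_skewAdjointMatricesLieSubalgebra, mem_skewAdjointMatricesSubmodule,
    Matrix.IsSkewAdjoint, Matrix.IsAdjointPair, mul_neg, ← add_eq_zero_iff_eq_neg]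
  rfl

theorem V0_transpose (D : ℕ) : (V0 D)ᵀ = V0 D := by
  ext i j
  simp [V0, or_comm]

theorem Mmat_transpose (D : ℕ) (c : Fin D → ℝ) (E : ℝ) (v : Fin D → ℝ) :
    (Mmat D c E v)ᵀ = Mmat D c E v := by
  simp [Mmat, V0_transpose]

theorem Mmat_apply_of_succ_eq {D : ℕ} (c : Fin D → ℝ) (E : ℝ) (v : Fin D → ℝ) {i j : Fin D}
    (h : (i : ℕ) + 1 = j) : Mmat D c E v i j = 1 := by
  have hij : i ≠ j := Fin.ne_of_val_ne (by omega)
  simp [Mmat, V0, h, hij]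

theorem Mmat_single_sub_Mmat_zero {D : ℕ} (c : Fin D → ℝ) (E : ℝ) (i : Fin D) :
    Mmat D c E (Pi.single i 1) - Mmat D c E 0 = c i • single i i 1 := by
  ext j k
  simp only [Mmat, Matrix.sub_apply, Matrix.add_apply, diagonal_apply, Matrix.smul_apply,
    single_apply, Pi.single_apply, Pi.zero_apply, smul_eq_mul]
  grind

theorem Xmat_eq_spUpper_one_add_spLower {D : ℕ} (c : Fin D → ℝ) (E : ℝ) (v : Fin D → ℝ) :
    Xmat D c E v = spUpper 1 + spLower (Mmat D c E v) := by
  simp [Xmat, spUpper_apply, spLower_apply, fromBlocks_add]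

theorem Xmat_single_sub_Xmat_zero {D : ℕ} (c : Fin D → ℝ) (E : ℝ) (i : Fin D) :
    Xmat D c E (Pi.single i 1) - Xmat D c E 0 = c i • spLower (single i i 1) := by
  rw [Xmat_eq_spUpper_one_add_spLower, Xmat_eq_spUpper_one_add_spLower, add_sub_add_left_eq_sub,
    ← map_sub, Mmat_single_sub_Mmat_zero, map_smul]

theorem Xmat_mem_sp {D : ℕ} (c : Fin D → ℝ) (E : ℝ) (v : Fin D → ℝ) :
    Xmat D c E v ∈ sp (Fin D) ℝ := by
  rw [Xmat, fromBlocks_mem_sp_iff]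
  exact ⟨transpose_one, Mmat_transpose D c E v, by simp⟩

theorem lieSpan_Xomega_eq_sp_general (D : ℕ) (c : Fin D → ℝ) (hc : ∀ i, c i ≠ 0)
    (E : ℝ) :
    (LieSubalgebra.lieSpan ℝ (Matrix (Fin D ⊕ Fin D) (Fin D ⊕ Fin D) ℝ)
        {X | ∃ v : Fin D → ℝ, (∀ i, v i = 0 ∨ v i = 1) ∧ X = Xmat D c E v} :
      Set (Matrix (Fin D ⊕ Fin D) (Fin D ⊕ Fin D) ℝ)) = spSet D := by
  set G := LieSubalgebra.lieSpan ℝ (Matrix (Fin D ⊕ Fin D) (Fin D ⊕ Fin D) ℝ)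
    {X | ∃ v : Fin D → ℝ, (∀ i, v i = 0 ∨ v i = 1) ∧ X = Xmat D c E v}
  have hgen : ∀ v : Fin D → ℝ, (∀ i, v i = 0 ∨ v i = 1) → Xmat D c E v ∈ G :=
    fun v hv => LieSubalgebra.subset_lieSpan ⟨v, hv, rfl⟩
  have hgen_zero := hgen 0 fun _ => Or.inl rfl
  have hL : ∀ i, spLower (single i i (1 : ℝ)) ∈ G := fun i => by
    have hgen_i := hgen (Pi.single i 1) fun j => by by_cases hj : j = i <;> simp [hj]
    have h := G.smul_mem (c i)⁻¹ (sub_mem hgen_i hgen_zero)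
    rwa [Xmat_single_sub_Xmat_zero, inv_smul_smul₀ (hc i)] at h
  rw [spSet_eq_sp, SetLike.coe_set_eq]
  refine le_antisymm (LieSubalgebra.lieSpan_le.mpr ?_) ?_
  · rintro _ ⟨v, -, rfl⟩
    exact Xmat_mem_sp c E v
  · rw [Xmat_eq_spUpper_one_add_spLower] at hgen_zero
    exact sp_le_of_spUpper_one_add_spLower_mem (Mmat_transpose D c E 0)
      (fun i j h => by simp [Mmat_apply_of_succ_eq c E 0 h]) hgen_zero hL

/-- The Lie subalgebra of `M_{2D}(ℝ)` generated by the matrices `X_ω(E)` for `ω ∈ {0,1}^D`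
is the full symplectic Lie algebra `𝔰𝔭_D(ℝ)`. -/
theorem lieSpan_Xomega_eq_sp (D : ℕ) (hD : 1 ≤ D) (c : Fin D → ℝ) (hc : ∀ i, c i ≠ 0)
    (E : ℝ) :
    (LieSubalgebra.lieSpan ℝ (Matrix (Fin D ⊕ Fin D) (Fin D ⊕ Fin D) ℝ)
        {X | ∃ v : Fin D → ℝ, (∀ i, v i = 0 ∨ v i = 1) ∧ X = Xmat D c E v} :
      Set (Matrix (Fin D ⊕ Fin D) (Fin D ⊕ Fin D) ℝ)) = spSet D :=
  lieSpan_Xomega_eq_sp_general D c hc E
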